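/- arXiv:1904.08274 — 2 statements merged into one kernel-verified Lean document; each statement's English description precedes it below -/
import Mathlib

section
/- Suppose G is a finite set of axis-aligned rectangular cells tiling a region, any two adjacent cells of G sharing a full common edge (aligned-adjacency), and G is connected under aligned-adjacency. Then no interior vertex of the union of G lying on an edge between two cells of G is a T-vertex, i.e., every interior vertex on a shared edge is a corner of all cells of G containing it. -/
/-- An axis-aligned rectangle [x1,x2] × [y1,y2]. -/
structure Rect where
  x1 : ℝ
  x2 : ℝ
  y1 : ℝ
  y2 : ℝ

namespace Rect

def toSet (R : Rect) : Set (ℝ × ℝ) := Set.Icc R.x1 R.x2 ×ˢ Set.Icc R.y1 R.y2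

def Valid (R : Rect) : Prop := R.x1 < R.x2 ∧ R.y1 < R.y2

def IsCorner (R : Rect) (v : ℝ × ℝ) : Prop :=
  (v.1 = R.x1 ∨ v.1 = R.x2) ∧ (v.2 = R.y1 ∨ v.2 = R.y2)

end Rect

/-- Two rectangles are aligned-adjacent if they share exactly one full common edge:
they abut horizontally with identical vertical extent, or vertically with identical
horizontal extent. -/
def AlignedAdj (R S : Rect) : Prop :=
  (R.x2 = S.x1 ∧ R.y1 = S.y1 ∧ R.y2 = S.y2) ∨
  (S.x2 = R.x1 ∧ R.y1 = S.y1 ∧ R.y2 = S.y2) ∨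
  (R.y2 = S.y1 ∧ R.x1 = S.x1 ∧ R.x2 = S.x2) ∨
  (S.y2 = R.y1 ∧ R.x1 = S.x1 ∧ R.x2 = S.x2)

/-!
Let `v` be a corner of a cell `R` lying in the relative interior of an edge of a cell `S`, say of
its top edge. Then `R` sits on top of that edge. Since `v` is interior to the union, some cell `T`
contains `v` together with the points just above it. `T` cannot overlap `S`, so it rests on the
top edge of `S` and meets `S` along a segment; aligned adjacency then gives `T` the horizontal
extent of `S`, so `v` is in the relative interior of the bottom edge of `T`, and `R` overlaps `T`.
The other edges are reduced to this one by the symmetries `(x, y) ↦ (x, -y)` and `(x, y) ↦ (y, x)`.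
-/

open Set Filter Topology

theorem eventually_exists_mem_of_mem_interior_biUnion {X ι : Type*} [TopologicalSpace X]
    {I : Set ι} (hI : I.Finite) {s : ι → Set X} (hs : ∀ i ∈ I, IsClosed (s i)) {v : X}
    (hv : v ∈ interior (⋃ i ∈ I, s i)) : ∀ᶠ x in 𝓝 v, ∃ i ∈ I, v ∈ s i ∧ x ∈ s i := by
  have hfar : IsClosed (⋃ i ∈ {i ∈ I | v ∉ s i}, s i) :=
    (hI.subset (sep_subset _ _)).isClosed_biUnion fun i hi => hs i hi.1
  have hv_far : v ∉ ⋃ i ∈ {i ∈ I | v ∉ s i}, s i := by simp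
  filter_upwards [hfar.isOpen_compl.mem_nhds hv_far, mem_interior_iff_mem_nhds.1 hv]
    with x hx_far hx
  obtain ⟨i, hi, hxi⟩ := mem_iUnion₂.1 hx
  exact ⟨i, hi, by_contra fun hvi => hx_far (mem_iUnion₂.2 ⟨i, ⟨hi, hvi⟩, hxi⟩), hxi⟩

namespace Rect

theorem isClosed_toSet (R : Rect) : IsClosed R.toSet := isClosed_Icc.prod isClosed_Icc

theorem interior_toSet (R : Rect) : interior R.toSet = Ioo R.x1 R.x2 ×ˢ Ioo R.y1 R.y2 := by
  rw [toSet, interior_prod_eq, interior_Icc, interior_Icc]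

theorem toSet_inter_infinite {R S : Rect} (hx : max R.x1 S.x1 < min R.x2 S.x2)
    (hy : max R.y1 S.y1 ≤ min R.y2 S.y2) : (R.toSet ∩ S.toSet).Infinite := by
  rw [toSet, toSet, prod_inter_prod, Icc_inter_Icc, Icc_inter_Icc]
  exact Set.infinite_prod.2 (Or.inl ⟨Icc_infinite hx, nonempty_Icc.2 hy⟩)

theorem exists_mem_toSet_above {G : Set Rect} (hG : G.Finite) {v : ℝ × ℝ}
    (hv : v ∈ interior (⋃ R ∈ G, R.toSet)) :
    ∃ T ∈ G, v ∈ T.toSet ∧ ∃ t > 0, (v.1, v.2 + t) ∈ T.toSet := by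
  have hpath : Tendsto (fun t : ℝ => (v.1, v.2 + t)) (𝓝[>] 0) (𝓝 v) :=
    ((continuous_const.prodMk (continuous_const.add continuous_id)).tendsto' 0 v
      (by simp)).mono_left nhdsWithin_le_nhds
  obtain ⟨t, ⟨T, hT, hvT, htT⟩, ht⟩ := ((hpath.eventually
    (eventually_exists_mem_of_mem_interior_biUnion hG (fun R _ => R.isClosed_toSet) hv)).and
    self_mem_nhdsWithin).exists
  exact ⟨T, hT, hvT, t, ht, htT⟩

def transpose (R : Rect) : Rect := ⟨R.y1, R.y2, R.x1, R.x2⟩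

def reflect (R : Rect) : Rect := ⟨R.x1, R.x2, -R.y2, -R.y1⟩

theorem toSet_transpose (R : Rect) :
    R.transpose.toSet = Homeomorph.prodComm ℝ ℝ ⁻¹' R.toSet :=
  (preimage_swap_prod _ _).symm

theorem toSet_reflect (R : Rect) :
    R.reflect.toSet = (Homeomorph.refl ℝ).prodCongr (Homeomorph.neg ℝ) ⁻¹' R.toSet := by
  ext ⟨x, y⟩
  simp only [toSet, reflect, mem_preimage, mem_prod, mem_Icc, neg_le, le_neg]
  tauto

theorem Valid.transpose {R : Rect} (hR : R.Valid) : R.transpose.Valid := hR.symm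

theorem Valid.reflect {R : Rect} (hR : R.Valid) : R.reflect.Valid := ⟨hR.1, neg_lt_neg hR.2⟩

end Rect

theorem AlignedAdj.transpose {R S : Rect} (h : AlignedAdj R S) :
    AlignedAdj R.transpose S.transpose := by
  unfold AlignedAdj at h ⊢
  tauto

theorem AlignedAdj.reflect {R S : Rect} (h : AlignedAdj R S) :
    AlignedAdj R.reflect S.reflect := by
  unfold AlignedAdj at h ⊢
  simp only [Rect.reflect, neg_inj]
  tauto

theorem mem_interior_biUnion_image {G : Set Rect} {f : Rect → Rect} (e : ℝ × ℝ ≃ₜ ℝ × ℝ)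
    (hfe : ∀ R, (f R).toSet = e ⁻¹' R.toSet) {v : ℝ × ℝ}
    (hv : v ∈ interior (⋃ R ∈ G, R.toSet)) :
    e.symm v ∈ interior (⋃ R ∈ f '' G, R.toSet) := by
  simp only [biUnion_image, hfe, ← preimage_iUnion₂, ← e.preimage_interior]
  simpa using hv

structure IsAlignedMesh (G : Set Rect) : Prop where
  finite : G.Finite
  valid : ∀ R ∈ G, R.Valid
  interior_disjoint : ∀ R ∈ G, ∀ S ∈ G, R ≠ S → interior R.toSet ∩ interior S.toSet = ∅
  alignedAdj : ∀ R ∈ G, ∀ S ∈ G, R ≠ S → (R.toSet ∩ S.toSet).Infinite → AlignedAdj R S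

namespace IsAlignedMesh

variable {G : Set Rect} (hG : IsAlignedMesh G)
include hG

theorem image {f : Rect → Rect} (e : ℝ × ℝ ≃ₜ ℝ × ℝ) (hfe : ∀ R, (f R).toSet = e ⁻¹' R.toSet)
    (hvalid : ∀ R, R.Valid → (f R).Valid) (hadj : ∀ R S, AlignedAdj R S → AlignedAdj (f R) (f S)) :
    IsAlignedMesh (f '' G) where
  finite := hG.finite.image f
  valid := by
    rintro _ ⟨R, hR, rfl⟩
    exact hvalid R (hG.valid R hR)
  interior_disjoint := by
    rintro _ ⟨R, hR, rfl⟩ _ ⟨S, hS, rfl⟩ hne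
    rw [hfe, hfe, ← e.preimage_interior, ← e.preimage_interior, ← preimage_inter,
      hG.interior_disjoint R hR S hS (by rintro rfl; exact hne rfl), preimage_empty]
  alignedAdj := by
    rintro _ ⟨R, hR, rfl⟩ _ ⟨S, hS, rfl⟩ hne hinf
    rw [hfe, hfe, ← preimage_inter] at hinf
    exact hadj R S (hG.alignedAdj R hR S hS (by rintro rfl; exact hne rfl)
      fun hfin => hinf (hfin.preimage e.injective.injOn))

theorem transpose : IsAlignedMesh (Rect.transpose '' G) :=
  hG.image _ Rect.toSet_transpose (fun _ => Rect.Valid.transpose) fun _ _ => AlignedAdj.transpose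

theorem reflect : IsAlignedMesh (Rect.reflect '' G) :=
  hG.image _ Rect.toSet_reflect (fun _ => Rect.Valid.reflect) fun _ _ => AlignedAdj.reflect

theorem eq_of_overlap {R S : Rect} (hR : R ∈ G) (hS : S ∈ G) (hx₁ : R.x1 < S.x2)
    (hx₂ : S.x1 < R.x2) (hy₁ : R.y1 < S.y2) (hy₂ : S.y1 < R.y2) : R = S := by
  by_contra hne
  obtain ⟨hRx, hRy⟩ := hG.valid R hR
  obtain ⟨hSx, hSy⟩ := hG.valid S hS
  have hmeet : (interior R.toSet ∩ interior S.toSet).Nonempty := by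
    rw [Rect.interior_toSet, Rect.interior_toSet, prod_inter_prod, Ioo_inter_Ioo, Ioo_inter_Ioo,
      prod_nonempty_iff, nonempty_Ioo, nonempty_Ioo]
    exact ⟨max_lt (lt_min hRx hx₁) (lt_min hx₂ hSx), max_lt (lt_min hRy hy₁) (lt_min hy₂ hSy)⟩
  exact hmeet.ne_empty (hG.interior_disjoint R hR S hS hne)

theorem false_of_corner_above_top_edge {v : ℝ × ℝ} (hint : v ∈ interior (⋃ R ∈ G, R.toSet))
    {S : Rect} (hS : S ∈ G) (hSx₁ : S.x1 < v.1) (hSx₂ : v.1 < S.x2) (hSy : S.y2 = v.2)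
    {R : Rect} (hR : R ∈ G) (hRx : v.1 = R.x1 ∨ v.1 = R.x2) (hRy : R.y1 = v.2) : False := by
  obtain ⟨T, hT, ⟨⟨hTv₁, hvT₁⟩, hTv₂, -⟩, t, ht, -, -, hvtT⟩ :=
    Rect.exists_mem_toSet_above hG.finite hint
  obtain ⟨hTx, hTy⟩ := hG.valid T hT
  obtain ⟨hSx, hSy'⟩ := hG.valid S hS
  obtain ⟨hRx', hRy'⟩ := hG.valid R hR
  have hTS : T ≠ S := by rintro rfl; linarith
  have hTy₁ : T.y1 = v.2 :=
    le_antisymm hTv₂ (not_lt.1 fun h => hTS (hG.eq_of_overlap hT hS (by linarith)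
      (by linarith) (by linarith) (by linarith)))
  have hadj := hG.alignedAdj T hT S hS hTS (Rect.toSet_inter_infinite
    (max_lt (lt_min hTx (by linarith)) (lt_min (by linarith) hSx))
    (max_le (le_min (by linarith) (by linarith)) (le_min (by linarith) (by linarith))))
  -- `T` rests on the top edge of `S`, so only the last kind of aligned adjacency is possible.
  obtain ⟨hTSx₁, hTSx₂⟩ : T.x1 = S.x1 ∧ T.x2 = S.x2 := by
    rcases hadj with ⟨-, h, -⟩ | ⟨-, h, -⟩ | ⟨h, -, -⟩ | ⟨-, h⟩
    all_goals first | exact h | (exfalso; linarith)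
  have hRT : R = T := by
    refine hG.eq_of_overlap hR hT ?_ ?_ (by linarith) (by linarith) <;>
      rcases hRx with h | h <;> linarith
  subst hRT
  rcases hRx with h | h <;> linarith

theorem false_of_corner_inside_horizontal_edge {v : ℝ × ℝ}
    (hint : v ∈ interior (⋃ R ∈ G, R.toSet)) {S : Rect} (hS : S ∈ G) (hSx₁ : S.x1 < v.1)
    (hSx₂ : v.1 < S.x2) (hSy₁ : S.y1 ≤ v.2) (hSy₂ : v.2 ≤ S.y2) {R : Rect} (hR : R ∈ G)
    (hRv : R.IsCorner v) : False := by
  obtain ⟨hRx, hRy⟩ := hRv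
  obtain ⟨hRx', hRy'⟩ := hG.valid R hR
  rcases le_or_gt S.y2 R.y1 with hAbove | hy₁
  · exact hG.false_of_corner_above_top_edge hint hS hSx₁ hSx₂
      (by rcases hRy with h | h <;> linarith) hR hRx (by rcases hRy with h | h <;> linarith)
  rcases le_or_gt R.y2 S.y1 with hBelow | hy₂
  · exact hG.reflect.false_of_corner_above_top_edge (mem_interior_biUnion_image _
      Rect.toSet_reflect hint) (mem_image_of_mem _ hS) hSx₁ hSx₂
      (by show -S.y1 = -v.2; rcases hRy with h | h <;> linarith) (mem_image_of_mem _ hR) hRx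
      (by show -R.y2 = -v.2; rcases hRy with h | h <;> linarith)
  have hRS := hG.eq_of_overlap hR hS (by rcases hRx with h | h <;> linarith)
    (by rcases hRx with h | h <;> linarith) hy₁ hy₂
  subst hRS
  rcases hRx with h | h <;> linarith

theorem isCorner_of_mem {v : ℝ × ℝ} (hint : v ∈ interior (⋃ R ∈ G, R.toSet)) {R : Rect}
    (hR : R ∈ G) (hRv : R.IsCorner v) {S : Rect} (hS : S ∈ G) (hvS : v ∈ S.toSet) :
    S.IsCorner v := by
  obtain ⟨⟨hSx₁, hSx₂⟩, hSy₁, hSy₂⟩ := hvS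
  by_contra hnot
  rcases not_and_or.1 hnot with hx | hy
  · obtain ⟨hx₁, hx₂⟩ := not_or.1 hx
    exact hG.false_of_corner_inside_horizontal_edge hint hS (hSx₁.lt_of_ne (Ne.symm hx₁))
      (hSx₂.lt_of_ne hx₂) hSy₁ hSy₂ hR hRv
  · obtain ⟨hy₁, hy₂⟩ := not_or.1 hy
    exact hG.transpose.false_of_corner_inside_horizontal_edge (mem_interior_biUnion_image _
      Rect.toSet_transpose hint) (mem_image_of_mem _ hS) (hSy₁.lt_of_ne (Ne.symm hy₁))
      (hSy₂.lt_of_ne hy₂) hSx₁ hSx₂ (mem_image_of_mem _ hR) hRv.symm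

end IsAlignedMesh

theorem no_T_vertex_on_interior_edges_of_connected_group_general
    (G : Finset Rect)
    (hvalid : ∀ R ∈ G, R.Valid)
    (hdisj : ∀ R ∈ G, ∀ S ∈ G, R ≠ S → interior R.toSet ∩ interior S.toSet = ∅)
    (hadj : ∀ R ∈ G, ∀ S ∈ G, R ≠ S → (R.toSet ∩ S.toSet).Infinite → AlignedAdj R S)
    (v : ℝ × ℝ)
    (hv : ∃ R ∈ G, R.IsCorner v)
    (hint : v ∈ interior (⋃ R ∈ G, R.toSet)) :
    ∀ S ∈ G, v ∈ S.toSet → S.IsCorner v := by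
  obtain ⟨R, hR, hRv⟩ := hv
  intro S hS hvS
  exact IsAlignedMesh.isCorner_of_mem ⟨G.finite_toSet, hvalid, hdisj, hadj⟩ hint hR hRv hS hvS

/-- In a finite group G of rectangular cells with pairwise disjoint interiors, in which
any two adjacent cells (cells meeting in infinitely many points, i.e. along a segment)
are aligned-adjacent, and which is connected under aligned-adjacency, there is no
T-vertex on interior edges: every vertex of a cell of G lying in the interior of the
union is a corner of every cell of G containing it. -/
theorem no_T_vertex_on_interior_edges_of_connected_group
    (G : Finset Rect)
    (hvalid : ∀ R ∈ G, R.Valid)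
    (hdisj : ∀ R ∈ G, ∀ S ∈ G, R ≠ S → interior R.toSet ∩ interior S.toSet = ∅)
    (hadj : ∀ R ∈ G, ∀ S ∈ G, R ≠ S → (R.toSet ∩ S.toSet).Infinite → AlignedAdj R S)
    (hconn : ∀ R ∈ G, ∀ S ∈ G,
      Relation.ReflTransGen (fun A B => A ∈ G ∧ B ∈ G ∧ AlignedAdj A B) R S)
    (v : ℝ × ℝ)
    (hv : ∃ R ∈ G, R.IsCorner v)
    (hint : v ∈ interior (⋃ R ∈ G, R.toSet)) :
    ∀ S ∈ G, v ∈ S.toSet → S.IsCorner v :=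
  no_T_vertex_on_interior_edges_of_connected_group_general G hvalid hdisj hadj v hv hint
end

section
/- Let b : ℝ² → ℝ be a function that is a bicubic polynomial on each cell of a rectangular mesh and is globally C^{1,1} (C¹ in each variable). If a cell θ is split into two subcells and, after re-expressing b in Bernstein form on the subcells via de Casteljau subdivision, the four Bézier ordinates associated with the new vertex v on the common edge of the subcells are set to zero in b's representation (and the matching ordinates in the neighboring cell across the edge containing v are set to zero correspondingly so that the C¹ conditions across all edges through v are maintained), then the modified function b̄ satisfies b̄(v) = 0, b̄_s(v) = 0, b̄_t(v) = 0, b̄_{st}(v) = 0, and b̄ remains C^{1,1}. -/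
/-- The cubic Bernstein polynomial `B_i³(u) = C(3,i) uⁱ (1-u)^{3-i}`. -/
noncomputable def bern3 (i : ℕ) (u : ℝ) : ℝ := (Nat.choose 3 i : ℝ) * u^i * (1-u)^(3-i)

/-!
A bicubic patch on `[xa, xb] × [ya, yb]`, restricted to its edge `x = xb`, is the cubic Bézier
curve with ordinates `C 3 j`, and its `x`-derivative there is the cubic with ordinates
`3 (C 3 j - C 2 j) / (xb - xa)`. So the `C¹` conditions say exactly that neighbouring patches agree
to first order across their common edge, which makes the glued function `C¹`; and the value,
gradient and twist of a patch at a corner depend only on the four ordinates at that corner.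
At `v` the value and gradient of `b̄` are those of the lower-left patch, and its twist is the
`y`-derivative of `∂ₓ b̄(x₁, ·)`, which is glued from the lower-left and upper-left patches, both
with zero twist at `v`.
-/

open Finset

section Gluing

variable {E F : Type*} [NormedAddCommGroup E] [NormedSpace ℝ E]
  [NormedAddCommGroup F] [NormedSpace ℝ F] {π : E → ℝ} {c : ℝ} {f g : E → F}

theorem hasFDerivAt_ite_le (hπ : Continuous π) (hfg : ∀ q, π q = c → f q = g q)
    {f' g' : E →L[ℝ] F} {p : E} (hf : HasFDerivAt f f' p) (hg : HasFDerivAt g g' p)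
    (hf'g' : π p = c → f' = g') :
    HasFDerivAt (fun q => if π q ≤ c then f q else g q) (if π p ≤ c then f' else g') p := by
  rcases lt_trichotomy (π p) c with hlt | heq | hgt
  · rw [if_pos hlt.le]
    refine hf.congr_of_eventuallyEq ?_
    filter_upwards [(isOpen_lt hπ continuous_const).mem_nhds hlt] with q hq
    exact if_pos (le_of_lt hq)
  · obtain rfl := hf'g' heq
    rw [if_pos heq.le]
    have hle : HasFDerivWithinAt (fun q => if π q ≤ c then f q else g q) f' {q | π q ≤ c} p :=
      hf.hasFDerivWithinAt.congr (fun q hq => if_pos hq) (if_pos heq.le)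
    have hge : HasFDerivWithinAt (fun q => if π q ≤ c then f q else g q) f' {q | c ≤ π q} p := by
      refine hg.hasFDerivWithinAt.congr (fun q hq => ?_) ?_
      · split_ifs with h
        exacts [hfg q (le_antisymm h hq), rfl]
      · rw [if_pos heq.le, hfg p heq]
    have huniv : {q | π q ≤ c} ∪ {q | c ≤ π q} = Set.univ :=
      Set.eq_univ_of_forall fun q => le_total (π q) c
    simpa only [huniv, hasFDerivWithinAt_univ] using hle.union hge
  · rw [if_neg (not_le.2 hgt)]
    refine hg.congr_of_eventuallyEq ?_
    filter_upwards [(isOpen_lt continuous_const hπ).mem_nhds hgt] with q hq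
    exact if_neg (not_le.2 hq)

theorem contDiff_one_ite_le (hπ : Continuous π) (hf : ContDiff ℝ 1 f) (hg : ContDiff ℝ 1 g)
    (hfg : ∀ q, π q = c → f q = g q) (hdfg : ∀ q, π q = c → fderiv ℝ f q = fderiv ℝ g q) :
    ContDiff ℝ 1 (fun q => if π q ≤ c then f q else g q) := by
  have hd (p : E) := hasFDerivAt_ite_le hπ hfg
    (hf.differentiable one_ne_zero p).hasFDerivAt (hg.differentiable one_ne_zero p).hasFDerivAt
    (hdfg p)
  refine contDiff_one_iff_fderiv.2 ⟨fun p => (hd p).differentiableAt, ?_⟩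
  rw [funext fun p => (hd p).fderiv]
  exact (hf.continuous_fderiv one_ne_zero).if_le (hg.continuous_fderiv one_ne_zero) hπ
    continuous_const hdfg

end Gluing

theorem HasDerivAt.ite_le {F : Type*} [NormedAddCommGroup F] [NormedSpace ℝ F]
    {f g : ℝ → F} {d : F} {c : ℝ} (hf : HasDerivAt f d c) (hg : HasDerivAt g d c)
    (hfg : f c = g c) : HasDerivAt (fun x => if x ≤ c then f x else g x) d c := by
  have h := hasFDerivAt_ite_le continuous_id (fun q (hq : q = c) => hq ▸ hfg)
    hf.hasFDerivAt hg.hasFDerivAt fun _ => rfl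
  rw [ite_self] at h
  exact hasDerivAt_iff_hasFDerivAt.2 h

section Contact

/-- Meant for differentiable `f` and `g`: elsewhere `deriv` is `0`. -/
def FirstOrderContactFst (f g : ℝ × ℝ → ℝ) (c : ℝ) : Prop :=
  ∀ y, f (c, y) = g (c, y) ∧ deriv (fun x => f (x, y)) c = deriv (fun x => g (x, y)) c

def FirstOrderContactSnd (f g : ℝ × ℝ → ℝ) (c : ℝ) : Prop :=
  ∀ x, f (x, c) = g (x, c) ∧ deriv (fun y => f (x, y)) c = deriv (fun y => g (x, y)) c

variable {f g : ℝ × ℝ → ℝ} {c : ℝ}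

theorem FirstOrderContactSnd.comp_swap (h : FirstOrderContactSnd f g c) :
    FirstOrderContactFst (f ∘ Prod.swap) (g ∘ Prod.swap) c :=
  h

theorem FirstOrderContactFst.fderiv_eq (h : FirstOrderContactFst f g c)
    (hf : Differentiable ℝ f) (hg : Differentiable ℝ g) (y : ℝ) :
    fderiv ℝ f (c, y) = fderiv ℝ g (c, y) := by
  have hfst {φ : ℝ × ℝ → ℝ} (hφ : Differentiable ℝ φ) :
      fderiv ℝ (fun x => φ (x, y)) c = (fderiv ℝ φ (c, y)).comp (.inl ℝ ℝ ℝ) :=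
    ((hφ _).hasFDerivAt.comp c (hasFDerivAt_prodMk_left c y)).fderiv
  have hsnd {φ : ℝ × ℝ → ℝ} (hφ : Differentiable ℝ φ) :
      fderiv ℝ (fun y' => φ (c, y')) y = (fderiv ℝ φ (c, y)).comp (.inr ℝ ℝ ℝ) :=
    ((hφ _).hasFDerivAt.comp y (hasFDerivAt_prodMk_right c y)).fderiv
  refine ContinuousLinearMap.prod_ext ?_ ?_
  · rw [← hfst hf, ← hfst hg, ← toSpanSingleton_deriv, ← toSpanSingleton_deriv, (h y).2]
  · rw [← hsnd hf, ← hsnd hg, funext fun y' => (h y').1]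

theorem FirstOrderContactFst.contDiff_ite (h : FirstOrderContactFst f g c)
    (hf : ContDiff ℝ 1 f) (hg : ContDiff ℝ 1 g) :
    ContDiff ℝ 1 (fun p : ℝ × ℝ => if p.1 ≤ c then f p else g p) := by
  refine contDiff_one_ite_le continuous_fst hf hg ?_ ?_ <;> rintro ⟨x, y⟩ (rfl : x = c)
  exacts [(h y).1, h.fderiv_eq (hf.differentiable one_ne_zero) (hg.differentiable one_ne_zero) y]

theorem FirstOrderContactSnd.contDiff_ite (h : FirstOrderContactSnd f g c)
    (hf : ContDiff ℝ 1 f) (hg : ContDiff ℝ 1 g) :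
    ContDiff ℝ 1 (fun p : ℝ × ℝ => if p.2 ≤ c then f p else g p) := by
  have hswap : ContDiff ℝ 1 (Prod.swap : ℝ × ℝ → ℝ × ℝ) := contDiff_snd.prodMk contDiff_fst
  exact (h.comp_swap.contDiff_ite (hf.comp hswap) (hg.comp hswap)).comp hswap

theorem FirstOrderContactFst.hasDerivAt_ite (h : FirstOrderContactFst f g c)
    (hf : Differentiable ℝ f) (hg : Differentiable ℝ g) (y : ℝ) :
    HasDerivAt (fun x => if x ≤ c then f (x, y) else g (x, y)) (deriv (fun x => f (x, y)) c) c := by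
  have hline {φ : ℝ × ℝ → ℝ} (hφ : Differentiable ℝ φ) :
      HasDerivAt (fun x => φ (x, y)) (deriv (fun x => φ (x, y)) c) c :=
    ((hφ _).comp c (differentiableAt_id.prodMk (differentiableAt_const y))).hasDerivAt
  exact (hline hf).ite_le ((h y).2 ▸ hline hg) (h y).1

theorem FirstOrderContactSnd.hasDerivAt_ite (h : FirstOrderContactSnd f g c)
    (hf : Differentiable ℝ f) (hg : Differentiable ℝ g) (x : ℝ) :
    HasDerivAt (fun y => if y ≤ c then f (x, y) else g (x, y)) (deriv (fun y => f (x, y)) c) c :=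
  have hswap : Differentiable ℝ (Prod.swap : ℝ × ℝ → ℝ × ℝ) :=
    differentiable_snd.prodMk differentiable_fst
  h.comp_swap.hasDerivAt_ite (hf.comp hswap) (hg.comp hswap) x

theorem FirstOrderContactFst.ite_snd {f₀ g₀ f₁ g₁ : ℝ × ℝ → ℝ}
    (h₀ : FirstOrderContactFst f₀ g₀ c) (h₁ : FirstOrderContactFst f₁ g₁ c) (b : ℝ) :
    FirstOrderContactFst (fun p => if p.2 ≤ b then f₀ p else f₁ p)
      (fun p => if p.2 ≤ b then g₀ p else g₁ p) c := by
  intro y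
  by_cases hy : y ≤ b
  · simpa only [hy, if_true] using h₀ y
  · simpa only [hy, if_false] using h₁ y

end Contact

section Bezier

noncomputable def bezier3 (c : ℕ → ℝ) (t : ℝ) : ℝ := ∑ i ∈ range 4, c i * bern3 i t

variable (c : ℕ → ℝ)

theorem bezier3_zero : bezier3 c 0 = c 0 := by
  simp [bezier3, bern3, sum_range_succ]

theorem bezier3_one : bezier3 c 1 = c 3 := by
  simp [bezier3, bern3, sum_range_succ]

theorem bezier3_congr {d : ℕ → ℝ} (h : ∀ i < 4, c i = d i) (t : ℝ) : bezier3 c t = bezier3 d t :=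
  sum_congr rfl fun i hi => by rw [h i (mem_range.1 hi)]

open Polynomial in
theorem hasDerivAt_bezier3 (t : ℝ) :
    HasDerivAt (bezier3 c) (3 * ((c 1 - c 0) * (1 - t) ^ 2 + 2 * (c 2 - c 1) * t * (1 - t) +
      (c 3 - c 2) * t ^ 2)) t := by
  let p : ℝ[X] := ∑ i ∈ range 4, C (c i) * bernsteinPolynomial ℝ 3 i
  have hp : (fun s => p.eval s) = bezier3 c := by
    funext s
    simp [p, bezier3, bern3, bernsteinPolynomial, sum_range_succ]
  refine hp ▸ (p.hasDerivAt t).congr_deriv ?_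
  simp only [p, bernsteinPolynomial, sum_range_succ, sum_range_zero, derivative_add,
    derivative_mul, derivative_C, derivative_pow, derivative_sub, derivative_one, derivative_X,
    derivative_natCast, eval_add, eval_mul, eval_C, eval_pow, eval_sub, eval_one, eval_X,
    eval_natCast, eval_zero]
  norm_num
  ring

theorem hasDerivAt_bezier3_comp_left (a b : ℝ) :
    HasDerivAt (fun s => bezier3 c ((s - a) / (b - a))) (3 * (c 1 - c 0) / (b - a)) a := by
  have hu := ((hasDerivAt_id a).sub_const a).div_const (b - a)
  refine ((hasDerivAt_bezier3 c 0).comp_of_eq _ hu (by simp)).congr_deriv ?_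
  ring

theorem hasDerivAt_bezier3_comp_right {a b : ℝ} (hab : a ≠ b) :
    HasDerivAt (fun s => bezier3 c ((s - a) / (b - a))) (3 * (c 3 - c 2) / (b - a)) b := by
  have hu := ((hasDerivAt_id b).sub_const a).div_const (b - a)
  refine ((hasDerivAt_bezier3 c 1).comp_of_eq _ hu
    (div_self (sub_ne_zero.2 hab.symm)).symm).congr_deriv ?_
  ring

end Bezier

section Patch

noncomputable def bicubicPatch (C : ℕ → ℕ → ℝ) (xa xb ya yb : ℝ) (p : ℝ × ℝ) : ℝ :=
  ∑ i ∈ range 4, ∑ j ∈ range 4,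
    C i j * bern3 i ((p.1 - xa) / (xb - xa)) * bern3 j ((p.2 - ya) / (yb - ya))

variable {C : ℕ → ℕ → ℝ} {xa xb ya yb : ℝ}

theorem contDiff_bicubicPatch {n : WithTop ℕ∞} : ContDiff ℝ n (bicubicPatch C xa xb ya yb) := by
  unfold bicubicPatch bern3
  fun_prop

theorem differentiable_bicubicPatch : Differentiable ℝ (bicubicPatch C xa xb ya yb) :=
  contDiff_bicubicPatch.differentiable one_ne_zero

theorem bicubicPatch_eq_bezier3_fst (x y : ℝ) :
    bicubicPatch C xa xb ya yb (x, y) =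
      bezier3 (fun i => bezier3 (C i) ((y - ya) / (yb - ya))) ((x - xa) / (xb - xa)) := by
  simp only [bicubicPatch, bezier3, sum_mul]
  exact sum_congr rfl fun i _ => sum_congr rfl fun j _ => by ring

theorem bicubicPatch_eq_bezier3_snd (x y : ℝ) :
    bicubicPatch C xa xb ya yb (x, y) =
      bezier3 (fun j => bezier3 (fun i => C i j) ((x - xa) / (xb - xa)))
        ((y - ya) / (yb - ya)) := by
  simp only [bicubicPatch, bezier3, sum_mul]
  exact sum_comm

theorem hasDerivAt_bicubicPatch_fst_left (y : ℝ) :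
    HasDerivAt (fun x => bicubicPatch C xa xb ya yb (x, y))
      (3 * bezier3 (fun j => (C 1 j - C 0 j) / (xb - xa)) ((y - ya) / (yb - ya))) xa := by
  simp only [bicubicPatch_eq_bezier3_fst]
  refine (hasDerivAt_bezier3_comp_left _ xa xb).congr_deriv ?_
  simp only [bezier3, sum_range_succ, sum_range_zero]
  ring

theorem hasDerivAt_bicubicPatch_fst_right (hx : xa ≠ xb) (y : ℝ) :
    HasDerivAt (fun x => bicubicPatch C xa xb ya yb (x, y))
      (3 * bezier3 (fun j => (C 3 j - C 2 j) / (xb - xa)) ((y - ya) / (yb - ya))) xb := by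
  simp only [bicubicPatch_eq_bezier3_fst]
  refine (hasDerivAt_bezier3_comp_right _ hx).congr_deriv ?_
  simp only [bezier3, sum_range_succ, sum_range_zero]
  ring

theorem hasDerivAt_bicubicPatch_snd_left (x : ℝ) :
    HasDerivAt (fun y => bicubicPatch C xa xb ya yb (x, y))
      (3 * bezier3 (fun i => (C i 1 - C i 0) / (yb - ya)) ((x - xa) / (xb - xa))) ya := by
  simp only [bicubicPatch_eq_bezier3_snd]
  refine (hasDerivAt_bezier3_comp_left _ ya yb).congr_deriv ?_
  simp only [bezier3, sum_range_succ, sum_range_zero]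
  ring

theorem hasDerivAt_bicubicPatch_snd_right (hy : ya ≠ yb) (x : ℝ) :
    HasDerivAt (fun y => bicubicPatch C xa xb ya yb (x, y))
      (3 * bezier3 (fun i => (C i 3 - C i 2) / (yb - ya)) ((x - xa) / (xb - xa))) yb := by
  simp only [bicubicPatch_eq_bezier3_snd]
  refine (hasDerivAt_bezier3_comp_right _ hy).congr_deriv ?_
  simp only [bezier3, sum_range_succ, sum_range_zero]
  ring

theorem firstOrderContactFst_bicubicPatch {CL CR : ℕ → ℕ → ℝ} {xc : ℝ} (hx : xa ≠ xb)
    (hC : ∀ j < 4, CL 3 j = CR 0 j ∧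
      (CL 3 j - CL 2 j) / (xb - xa) = (CR 1 j - CR 0 j) / (xc - xb)) :
    FirstOrderContactFst (bicubicPatch CL xa xb ya yb) (bicubicPatch CR xb xc ya yb) xb := by
  intro y
  constructor
  · rw [bicubicPatch_eq_bezier3_fst, bicubicPatch_eq_bezier3_fst,
      div_self (sub_ne_zero.2 hx.symm), sub_self, zero_div, bezier3_one, bezier3_zero]
    exact bezier3_congr _ (fun j hj => (hC j hj).1) _
  · rw [(hasDerivAt_bicubicPatch_fst_right hx y).deriv, (hasDerivAt_bicubicPatch_fst_left y).deriv,
      bezier3_congr _ fun j hj => (hC j hj).2]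

theorem firstOrderContactSnd_bicubicPatch {CB CT : ℕ → ℕ → ℝ} {yc : ℝ} (hy : ya ≠ yb)
    (hC : ∀ i < 4, CB i 3 = CT i 0 ∧
      (CB i 3 - CB i 2) / (yb - ya) = (CT i 1 - CT i 0) / (yc - yb)) :
    FirstOrderContactSnd (bicubicPatch CB xa xb ya yb) (bicubicPatch CT xa xb yb yc) yb := by
  intro x
  constructor
  · rw [bicubicPatch_eq_bezier3_snd, bicubicPatch_eq_bezier3_snd,
      div_self (sub_ne_zero.2 hy.symm), sub_self, zero_div, bezier3_one, bezier3_zero]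
    exact bezier3_congr _ (fun i hi => (hC i hi).1) _
  · rw [(hasDerivAt_bicubicPatch_snd_right hy x).deriv, (hasDerivAt_bicubicPatch_snd_left x).deriv,
      bezier3_congr _ fun i hi => (hC i hi).2]

theorem bicubicPatch_top_right (hx : xa ≠ xb) (hy : ya ≠ yb) :
    bicubicPatch C xa xb ya yb (xb, yb) = C 3 3 := by
  rw [bicubicPatch_eq_bezier3_fst, div_self (sub_ne_zero.2 hx.symm),
    div_self (sub_ne_zero.2 hy.symm), bezier3_one, bezier3_one]

theorem deriv_fst_bicubicPatch_top_right (hx : xa ≠ xb) (hy : ya ≠ yb) :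
    deriv (fun x => bicubicPatch C xa xb ya yb (x, yb)) xb = 3 * (C 3 3 - C 2 3) / (xb - xa) := by
  rw [(hasDerivAt_bicubicPatch_fst_right hx yb).deriv, div_self (sub_ne_zero.2 hy.symm),
    bezier3_one, mul_div_assoc]

theorem deriv_snd_bicubicPatch_top_right (hx : xa ≠ xb) (hy : ya ≠ yb) :
    deriv (fun y => bicubicPatch C xa xb ya yb (xb, y)) yb = 3 * (C 3 3 - C 3 2) / (yb - ya) := by
  rw [(hasDerivAt_bicubicPatch_snd_right hy xb).deriv, div_self (sub_ne_zero.2 hx.symm),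
    bezier3_one, mul_div_assoc]

theorem deriv_fst_bicubicPatch_bottom_right (hx : xa ≠ xb) :
    deriv (fun x => bicubicPatch C xa xb ya yb (x, ya)) xb = 3 * (C 3 0 - C 2 0) / (xb - xa) := by
  rw [(hasDerivAt_bicubicPatch_fst_right hx ya).deriv, sub_self, zero_div, bezier3_zero,
    mul_div_assoc]

theorem hasDerivAt_deriv_fst_bicubicPatch_top_right (hx : xa ≠ xb) (hy : ya ≠ yb) :
    HasDerivAt (fun y => deriv (fun x => bicubicPatch C xa xb ya yb (x, y)) xb)
      (9 * (C 3 3 - C 2 3 - C 3 2 + C 2 2) / ((xb - xa) * (yb - ya))) yb := by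
  rw [funext fun y => (hasDerivAt_bicubicPatch_fst_right hx y).deriv]
  refine ((hasDerivAt_bezier3_comp_right _ hy).const_mul 3).congr_deriv ?_
  rw [div_mul_eq_div_div]
  ring

theorem hasDerivAt_deriv_fst_bicubicPatch_bottom_right (hx : xa ≠ xb) :
    HasDerivAt (fun y => deriv (fun x => bicubicPatch C xa xb ya yb (x, y)) xb)
      (9 * (C 3 1 - C 2 1 - C 3 0 + C 2 0) / ((xb - xa) * (yb - ya))) ya := by
  rw [funext fun y => (hasDerivAt_bicubicPatch_fst_right hx y).deriv]
  refine ((hasDerivAt_bezier3_comp_left _ ya yb).const_mul 3).congr_deriv ?_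
  rw [div_mul_eq_div_div]
  ring

end Patch

theorem pht_modification_vanishes_at_new_vertex_general
    (x0 x1 x2 y0 y1 y2 : ℝ)
    (hx0 : x0 < x1) (hy0 : y0 < y1)
    (B00 B10 B01 B11 : ℕ → ℕ → ℝ)
    -- ordinates associated with the vertex v = (x1, y1) are set to zero
    (hz00 : ∀ i ∈ ({2, 3} : Set ℕ), ∀ j ∈ ({2, 3} : Set ℕ), B00 i j = 0)
    (hz01 : ∀ i ∈ ({2, 3} : Set ℕ), ∀ j ∈ ({0, 1} : Set ℕ), B01 i j = 0)
    -- C¹ conditions across the four edges through v are maintained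
    (hC1a : ∀ j < 4, B00 3 j = B10 0 j ∧
      (B00 3 j - B00 2 j)/(x1-x0) = (B10 1 j - B10 0 j)/(x2-x1))
    (hC1b : ∀ j < 4, B01 3 j = B11 0 j ∧
      (B01 3 j - B01 2 j)/(x1-x0) = (B11 1 j - B11 0 j)/(x2-x1))
    (hC1c : ∀ i < 4, B00 i 3 = B01 i 0 ∧
      (B00 i 3 - B00 i 2)/(y1-y0) = (B01 i 1 - B01 i 0)/(y2-y1))
    (hC1d : ∀ i < 4, B10 i 3 = B11 i 0 ∧
      (B10 i 3 - B10 i 2)/(y1-y0) = (B11 i 1 - B11 i 0)/(y2-y1)) :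
    let loc : (ℕ → ℕ → ℝ) → ℝ → ℝ → ℝ → ℝ → ℝ × ℝ → ℝ := fun C xa xb ya yb p =>
      ∑ i ∈ Finset.range 4, ∑ j ∈ Finset.range 4,
        C i j * bern3 i ((p.1 - xa)/(xb - xa)) * bern3 j ((p.2 - ya)/(yb - ya))
    let bbar : ℝ × ℝ → ℝ := fun p =>
      if p.1 ≤ x1 then
        (if p.2 ≤ y1 then loc B00 x0 x1 y0 y1 p else loc B01 x0 x1 y1 y2 p)
      else
        (if p.2 ≤ y1 then loc B10 x1 x2 y0 y1 p else loc B11 x1 x2 y1 y2 p)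
    bbar (x1, y1) = 0 ∧
    deriv (fun a => bbar (a, y1)) x1 = 0 ∧
    deriv (fun a => bbar (x1, a)) y1 = 0 ∧
    deriv (fun a => deriv (fun a' => bbar (a', a)) x1) y1 = 0 ∧
    ContDiffOn ℝ 1 bbar (Set.Ioo x0 x2 ×ˢ Set.Ioo y0 y2) := by
  intro loc bbar
  have hx : x0 ≠ x1 := hx0.ne
  have hy : y0 ≠ y1 := hy0.ne
  have hleft := firstOrderContactSnd_bicubicPatch (xa := x0) (xb := x1) hy hC1c
  have hright := firstOrderContactSnd_bicubicPatch (xa := x1) (xb := x2) hy hC1d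
  have hmid := (firstOrderContactFst_bicubicPatch (ya := y0) (yb := y1) hx hC1a).ite_snd
    (firstOrderContactFst_bicubicPatch (ya := y1) (yb := y2) hx hC1b) y1
  have hL := hleft.contDiff_ite contDiff_bicubicPatch contDiff_bicubicPatch
  have hR := hright.contDiff_ite contDiff_bicubicPatch contDiff_bicubicPatch
  have hdx (y : ℝ) : deriv (fun x => bbar (x, y)) x1 =
      if y ≤ y1 then deriv (fun x => bicubicPatch B00 x0 x1 y0 y1 (x, y)) x1
      else deriv (fun x => bicubicPatch B01 x0 x1 y1 y2 (x, y)) x1 := by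
    refine (hmid.hasDerivAt_ite (hL.differentiable one_ne_zero) (hR.differentiable one_ne_zero)
      y).deriv.trans ?_
    by_cases h : y ≤ y1 <;> simp only [h, if_true, if_false]
  refine ⟨?_, ?_, ?_, ?_, (hmid.contDiff_ite hL hR).contDiffOn⟩
  · simp only [bbar, le_refl, if_true]
    exact (bicubicPatch_top_right hx hy).trans (hz00 3 (by simp) 3 (by simp))
  · rw [hdx, if_pos le_rfl, deriv_fst_bicubicPatch_top_right hx hy]
    simp [hz00]
  · simp only [bbar, le_refl, if_true]
    refine (hleft.hasDerivAt_ite differentiable_bicubicPatch differentiable_bicubicPatch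
      x1).deriv.trans ?_
    rw [deriv_snd_bicubicPatch_top_right hx hy]
    simp [hz00]
  · rw [funext hdx]
    refine (HasDerivAt.ite_le ?_ ?_ ?_).deriv
    · exact (hasDerivAt_deriv_fst_bicubicPatch_top_right hx hy).congr_deriv (by simp [hz00])
    · exact (hasDerivAt_deriv_fst_bicubicPatch_bottom_right hx).congr_deriv (by simp [hz01])
    · rw [deriv_fst_bicubicPatch_top_right hx hy, deriv_fst_bicubicPatch_bottom_right hx]
      simp [hz00, hz01]

/-- The modification mechanism of (modified) PHT-splines: after subdivision, if in the
four bicubic pieces around a new vertex v = (x1,y1) the Bézier ordinates associated with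
v (the 2×2 block of ordinates nearest v in each piece) are set to zero, and the C¹
matching conditions across the four edges through v are maintained, then the modified
function vanishes to first order at v (value, both first partials, and the mixed second
partial are zero) and remains C^{1,1} in a neighborhood of v. -/
theorem pht_modification_vanishes_at_new_vertex
    (x0 x1 x2 y0 y1 y2 : ℝ)
    (hx0 : x0 < x1) (hx1 : x1 < x2) (hy0 : y0 < y1) (hy1 : y1 < y2)
    (B00 B10 B01 B11 : ℕ → ℕ → ℝ)
    -- ordinates associated with the vertex v = (x1, y1) are set to zero
    (hz00 : ∀ i ∈ ({2, 3} : Set ℕ), ∀ j ∈ ({2, 3} : Set ℕ), B00 i j = 0)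
    (hz10 : ∀ i ∈ ({0, 1} : Set ℕ), ∀ j ∈ ({2, 3} : Set ℕ), B10 i j = 0)
    (hz01 : ∀ i ∈ ({2, 3} : Set ℕ), ∀ j ∈ ({0, 1} : Set ℕ), B01 i j = 0)
    (hz11 : ∀ i ∈ ({0, 1} : Set ℕ), ∀ j ∈ ({0, 1} : Set ℕ), B11 i j = 0)
    -- C¹ conditions across the four edges through v are maintained
    (hC1a : ∀ j < 4, B00 3 j = B10 0 j ∧
      (B00 3 j - B00 2 j)/(x1-x0) = (B10 1 j - B10 0 j)/(x2-x1))
    (hC1b : ∀ j < 4, B01 3 j = B11 0 j ∧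
      (B01 3 j - B01 2 j)/(x1-x0) = (B11 1 j - B11 0 j)/(x2-x1))
    (hC1c : ∀ i < 4, B00 i 3 = B01 i 0 ∧
      (B00 i 3 - B00 i 2)/(y1-y0) = (B01 i 1 - B01 i 0)/(y2-y1))
    (hC1d : ∀ i < 4, B10 i 3 = B11 i 0 ∧
      (B10 i 3 - B10 i 2)/(y1-y0) = (B11 i 1 - B11 i 0)/(y2-y1)) :
    let loc : (ℕ → ℕ → ℝ) → ℝ → ℝ → ℝ → ℝ → ℝ × ℝ → ℝ := fun C xa xb ya yb p =>
      ∑ i ∈ Finset.range 4, ∑ j ∈ Finset.range 4,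
        C i j * bern3 i ((p.1 - xa)/(xb - xa)) * bern3 j ((p.2 - ya)/(yb - ya))
    let bbar : ℝ × ℝ → ℝ := fun p =>
      if p.1 ≤ x1 then
        (if p.2 ≤ y1 then loc B00 x0 x1 y0 y1 p else loc B01 x0 x1 y1 y2 p)
      else
        (if p.2 ≤ y1 then loc B10 x1 x2 y0 y1 p else loc B11 x1 x2 y1 y2 p)
    bbar (x1, y1) = 0 ∧
    deriv (fun a => bbar (a, y1)) x1 = 0 ∧
    deriv (fun a => bbar (x1, a)) y1 = 0 ∧
    deriv (fun a => deriv (fun a' => bbar (a', a)) x1) y1 = 0 ∧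
    ContDiffOn ℝ 1 bbar (Set.Ioo x0 x2 ×ˢ Set.Ioo y0 y2) :=
  pht_modification_vanishes_at_new_vertex_general x0 x1 x2 y0 y1 y2 hx0 hy0 B00 B10 B01 B11 hz00
    hz01 hC1a hC1b hC1c hC1d
end
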